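/- arXiv:1412.0987 — 2 statements merged into one kernel-verified Lean document; each statement's English description precedes it below -/
import Mathlib

section
/- Let Δ be Z-graded with compatible positive system, and let I be a lower ideal of Δ(1). Then ⟨I⟩ = ⋃_{k≥1} I^k is a bi-convex subset of Δ⁺; that is, both ⟨I⟩ and Δ⁺ \ ⟨I⟩ are closed under addition of roots. -/
open RealInnerProductSpace

variable {V : Type*} [NormedAddCommGroup V] [InnerProductSpace ℝ V] [FiniteDimensional ℝ V]

/-- The orthogonal reflection in the hyperplane orthogonal to `α`. -/
noncomputable def sref (α : V) : V ≃ₗ[ℝ] V :=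
  (Submodule.reflection ((ℝ ∙ α)ᗮ)).toLinearEquiv

/-- `Δ` is an (irreducible, crystallographic, reduced) root system, equipped with a
`ℤ`-grading `d` (so that `Δ(i) = {γ ∈ Δ | d γ = i}`) and a compatible set `Pos = Δ⁺`
of positive roots (compatibility: every root of level `≥ 1` is positive). -/
structure GradedRootSystem (Δ : Set V) (d : V → ℤ) (Pos : Set V) : Prop where
  finite : Δ.Finite
  span_top : Submodule.span ℝ Δ = ⊤
  nonzero : ∀ α ∈ Δ, α ≠ 0
  neg_mem : ∀ α ∈ Δ, -α ∈ Δ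
  reduced : ∀ α ∈ Δ, ∀ c : ℝ, c • α ∈ Δ → c = 1 ∨ c = -1
  reflect_mem : ∀ α ∈ Δ, ∀ β ∈ Δ, β - (2 * ⟪β, α⟫ / ⟪α, α⟫) • α ∈ Δ
  crystallographic : ∀ α ∈ Δ, ∀ β ∈ Δ, ∃ n : ℤ, (n : ℝ) = 2 * ⟪β, α⟫ / ⟪α, α⟫
  irreducible : ∀ Δ₁ Δ₂ : Set V, Δ = Δ₁ ∪ Δ₂ → (∀ a ∈ Δ₁, ∀ b ∈ Δ₂, ⟪a, b⟫ = 0) →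
    Δ₁ = ∅ ∨ Δ₂ = ∅
  grade_add : ∀ γ₁ ∈ Δ, ∀ γ₂ ∈ Δ, γ₁ + γ₂ ∈ Δ → d (γ₁ + γ₂) = d γ₁ + d γ₂
  grade_neg : ∀ γ ∈ Δ, d (-γ) = - d γ
  pos_subset : Pos ⊆ Δ
  pos_iff : ∀ γ ∈ Δ, (γ ∈ Pos ↔ -γ ∉ Pos)
  pos_add : ∀ γ₁ ∈ Pos, ∀ γ₂ ∈ Pos, γ₁ + γ₂ ∈ Δ → γ₁ + γ₂ ∈ Pos
  compatible : ∀ γ ∈ Δ, 1 ≤ d γ → γ ∈ Pos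

/-- The level set `Δ(i)` of the grading. -/
def level (Δ : Set V) (d : V → ℤ) (i : ℤ) : Set V := {γ ∈ Δ | d γ = i}

/-- `Δ(≥ k)`. -/
def levelGE (Δ : Set V) (d : V → ℤ) (k : ℤ) : Set V := {γ ∈ Δ | k ≤ d γ}

/-- `Δ(≤ k)`. -/
def levelLE (Δ : Set V) (d : V → ℤ) (k : ℤ) : Set V := {γ ∈ Δ | d γ ≤ k}

/-- `Δ(0)⁺`, the positive part of `Δ(0)`. -/
def pos0 (d : V → ℤ) (Pos : Set V) : Set V := {γ ∈ Pos | d γ = 0}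

/-- The simple roots of a positive system `P`: positive roots that are not the sum
of two positive roots. -/
def simpleRoots (P : Set V) : Set V := {γ ∈ P | ¬ ∃ a ∈ P, ∃ b ∈ P, γ = a + b}

/-- `idealPow Δ I k = I^k`, with `I¹ = I` and `I^{k+1} = (I + I^k) ∩ Δ`
(and `I⁰ = ∅` by convention). -/
def idealPow (Δ I : Set V) : ℕ → Set V
  | 0 => ∅
  | 1 => I
  | (k+2) => {x ∈ Δ | ∃ a ∈ I, ∃ b ∈ idealPow Δ I (k+1), x = a + b}

/-- `⟨I⟩ = ⋃_{k ≥ 1} I^k`. -/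
def gen (Δ I : Set V) : Set V := ⋃ k : ℕ, idealPow Δ I (k+1)

/-- A subset `M` of roots is closed if it is closed under root addition. -/
def IsClosedSubset (Δ M : Set V) : Prop :=
  ∀ γ₁ ∈ M, ∀ γ₂ ∈ M, γ₁ + γ₂ ∈ Δ → γ₁ + γ₂ ∈ M

/-- Bi-convexity of `M ⊆ Δ⁺`: both `M` and `Δ⁺ \ M` are closed. -/
def IsBiConvex (Δ Pos M : Set V) : Prop :=
  IsClosedSubset Δ M ∧ IsClosedSubset Δ (Pos \ M)

/-- The partial order on each level `Δ(i)`: `γ' ≼ γ` iff `γ - γ'` is a nonnegative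
integral combination of the simple roots `Π(0)` of `Δ(0)⁺`. -/
def leLevel (d : V → ℤ) (Pos : Set V) (γ' γ : V) : Prop :=
  γ - γ' ∈ AddSubmonoid.closure (simpleRoots (pos0 d Pos))

/-- A lower ideal of the weight poset `Δ(i)`. -/
def IsLowerIdeal (Δ : Set V) (d : V → ℤ) (Pos : Set V) (i : ℤ) (I : Set V) : Prop :=
  I ⊆ level Δ d i ∧ ∀ γ ∈ I, ∀ ν ∈ level Δ d i, leLevel d Pos ν γ → ν ∈ I

/-- An upper ideal of the weight poset `Δ(i)`. -/
def IsUpperIdeal (Δ : Set V) (d : V → ℤ) (Pos : Set V) (i : ℤ) (I : Set V) : Prop :=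
  I ⊆ level Δ d i ∧ ∀ γ ∈ I, ∀ ν ∈ level Δ d i, leLevel d Pos γ ν → ν ∈ I

/-- The Weyl group of the set of roots `S`: the subgroup of `GL(V)` generated by the
reflections `s_α`, `α ∈ S`. -/
noncomputable def weyl (S : Set V) : Subgroup (V ≃ₗ[ℝ] V) :=
  Subgroup.closure {g | ∃ α ∈ S, g = sref α}

/-- The inversion set `N(w) = {γ ∈ Δ⁺ | -w(γ) ∈ Δ⁺}`. -/
def invSet (Pos : Set V) (w : V ≃ₗ[ℝ] V) : Set V := {γ ∈ Pos | -(w γ) ∈ Pos}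

/-- `W⁰`, the minimal length coset representatives of `W/W(0)`:
elements of `W` sending `Δ(0)⁺` into `Δ⁺`. -/
noncomputable def W0 (Δ : Set V) (d : V → ℤ) (Pos : Set V) : Set (V ≃ₗ[ℝ] V) :=
  {w | w ∈ weyl Δ ∧ ∀ γ ∈ pos0 d Pos, w γ ∈ Pos}

/-!
A root that is a sum of `k` elements of `I` lies in `I^k`: some summand makes an acute angle
with it, so it can be split off, leaving a root. Hence `⟨I⟩` is closed.

For the complement, let `γ + ν ∈ I^{k+1}` with `γ, ν ∈ Δ⁺`. Each `I^k` is stable under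
subtracting roots of `Δ(0)⁺`, which settles the case that `γ` or `ν` has level `0`. Otherwise
write `γ + ν = a + b` with `a ∈ I`, `b ∈ I^k`; since `a`, `b`, `a + b` and `a + b - ν` are roots,
`a - ν` or `b - ν` is a root or zero, and comparing levels either puts `γ` or `ν` directly in
some `I^j`, or reduces to a decomposition of `b ∈ I^k`, where induction on `k` applies.
-/

section

variable {E : Type*} [NormedAddCommGroup E]

theorem mem_gen_of_mem_idealPow {Δ I : Set E} {k : ℕ} {x : E} (hx : x ∈ idealPow Δ I (k + 1)) :
    x ∈ gen Δ I :=
  Set.mem_iUnion.2 ⟨k, hx⟩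

theorem exists_list_of_mem_idealPow {Δ I : Set E} {k : ℕ} {x : E}
    (hx : x ∈ idealPow Δ I (k + 1)) :
    ∃ L : List E, (∀ y ∈ L, y ∈ I) ∧ L.length = k + 1 ∧ L.sum = x := by
  induction k generalizing x with
  | zero => exact ⟨[x], List.forall_mem_singleton.2 hx, rfl, List.sum_singleton⟩
  | succ k ih =>
    obtain ⟨-, a, ha, b, hb, rfl⟩ := hx
    obtain ⟨L, hL, hlen, rfl⟩ := ih hb
    exact ⟨a :: L, List.forall_mem_cons.2 ⟨ha, hL⟩, by rw [List.length_cons, hlen], List.sum_cons⟩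

variable [InnerProductSpace ℝ E]

theorem exists_mem_inner_pos_of_inner_sum_pos {v : E} :
    ∀ {L : List E}, 0 < ⟪v, L.sum⟫ → ∃ x ∈ L, 0 < ⟪v, x⟫
  | [], hL => by simp at hL
  | x :: t, hL => by
    rw [List.sum_cons, inner_add_right] at hL
    by_cases hx : 0 < ⟪v, x⟫
    · exact ⟨x, List.mem_cons_self, hx⟩
    · obtain ⟨y, hy, hvy⟩ := exists_mem_inner_pos_of_inner_sum_pos (L := t) (by linarith)
      exact ⟨y, List.mem_cons_of_mem x hy, hvy⟩

namespace GradedRootSystem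

variable {Δ : Set E} {d : E → ℤ} {Pos I : Set E}

theorem sub_mem_of_inner_pos (h : GradedRootSystem Δ d Pos) {x y : E} (hx : x ∈ Δ) (hy : y ∈ Δ)
    (hxy : 0 < ⟪x, y⟫) (hne : x ≠ y) : x - y ∈ Δ := by
  obtain ⟨m, hm⟩ := h.crystallographic y hy x hx
  obtain ⟨n, hn⟩ := h.crystallographic x hx y hy
  rw [real_inner_comm] at hn
  by_cases hm1 : m = 1
  · have := h.reflect_mem y hy x hx
    rwa [← hm, hm1, Int.cast_one, one_smul] at this
  by_cases hn1 : n = 1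
  · have := h.neg_mem _ (h.reflect_mem x hx y hy)
    rwa [real_inner_comm, ← hn, hn1, Int.cast_one, one_smul, neg_sub] at this
  -- otherwise both Cartan integers are at least `2`, which forces `‖x - y‖² ≤ 0`
  have hxx := real_inner_self_pos.2 (h.nonzero x hx)
  have hyy := real_inner_self_pos.2 (h.nonzero y hy)
  have hm0 : 0 < m := by exact_mod_cast (hm ▸ by positivity : (0 : ℝ) < m)
  have hn0 : 0 < n := by exact_mod_cast (hn ▸ by positivity : (0 : ℝ) < n)
  have hm2 : (2 : ℝ) ≤ m := by exact_mod_cast (by omega : 2 ≤ m)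
  have hn2 : (2 : ℝ) ≤ n := by exact_mod_cast (by omega : 2 ≤ n)
  rw [hm, le_div_iff₀ hyy] at hm2
  rw [hn, le_div_iff₀ hxx] at hn2
  refine absurd (sub_eq_zero.1 (real_inner_self_nonpos.1 ?_)) hne
  rw [inner_sub_left, inner_sub_right, inner_sub_right]
  linarith [real_inner_comm x y]

theorem add_mem_of_inner_neg (h : GradedRootSystem Δ d Pos) {x y : E} (hx : x ∈ Δ) (hy : y ∈ Δ)
    (hxy : ⟪x, y⟫ < 0) (hne : x + y ≠ 0) : x + y ∈ Δ := by
  rw [← sub_neg_eq_add] at hne ⊢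
  exact h.sub_mem_of_inner_pos hx (h.neg_mem y hy) (by rw [inner_neg_right]; linarith)
    (sub_ne_zero.1 hne)

theorem list_sum_ne_zero (h : GradedRootSystem Δ d Pos) {L : List E} (hL : ∀ x ∈ L, x ∈ Pos)
    (hne : L ≠ []) : L.sum ≠ 0 := by
  classical
  induction hlen : L.length generalizing L with
  | zero => exact absurd (List.length_eq_zero_iff.1 hlen) hne
  | succ n ih =>
    obtain ⟨x, t, rfl⟩ := List.exists_cons_of_ne_nil hne
    intro hsum
    rw [List.sum_cons] at hsum
    have hx := hL x List.mem_cons_self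
    have hxΔ := h.pos_subset hx
    rcases eq_or_ne t [] with rfl | ht
    · exact h.nonzero x hxΔ (by simpa using hsum)
    -- some summand `y` of `t` makes an obtuse angle with `x`, and `x + y` is a shorter replacement
    obtain ⟨y, hyt, hxy⟩ : ∃ y ∈ t, 0 < ⟪-x, y⟫ := by
      refine exists_mem_inner_pos_of_inner_sum_pos ?_
      rw [eq_neg_of_add_eq_zero_right hsum, inner_neg_neg]
      exact real_inner_self_pos.2 (h.nonzero x hxΔ)
    have hy := hL y (List.mem_cons_of_mem x hyt)
    have hyΔ := h.pos_subset hy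
    have hxyΔ : x + y ∈ Δ := by
      refine h.add_mem_of_inner_neg hxΔ hyΔ (by rw [inner_neg_left] at hxy; linarith) fun e => ?_
      exact (h.pos_iff y hyΔ).1 hy (eq_neg_of_add_eq_zero_left e ▸ hx)
    refine ih (L := (x + y) :: t.erase y) ?_ (List.cons_ne_nil _ _) ?_ ?_
    · intro z hz
      rcases List.mem_cons.1 hz with rfl | hz
      · exact h.pos_add x hx y hy hxyΔ
      · exact hL z (List.mem_cons_of_mem x (List.mem_of_mem_erase hz))
    · simp only [List.length_cons, List.length_erase_of_mem hyt] at hlen ⊢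
      have := List.length_pos_of_mem hyt
      omega
    · rw [List.sum_cons, ← hsum, (List.perm_cons_erase hyt).sum_eq, List.sum_cons]
      abel

theorem eq_zero_of_mem_closure_of_neg_mem_closure (h : GradedRootSystem Δ d Pos) {x : E}
    (hx : x ∈ AddSubmonoid.closure Pos) (hnx : -x ∈ AddSubmonoid.closure Pos) : x = 0 := by
  obtain ⟨L₁, hL₁, rfl⟩ := AddSubmonoid.exists_list_of_mem_closure hx
  obtain ⟨L₂, hL₂, hs⟩ := AddSubmonoid.exists_list_of_mem_closure hnx
  by_contra hne
  refine h.list_sum_ne_zero (L := L₁ ++ L₂) ?_ ?_ (by rw [List.sum_append, hs, add_neg_cancel])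
  · simpa only [List.mem_append, or_imp, forall_and] using And.intro hL₁ hL₂
  · intro e
    exact hne (by simp [(List.append_eq_nil_iff.1 e).1])

def RootLT (Pos : Set E) (a b : E) : Prop :=
  b - a ∈ AddSubmonoid.closure Pos ∧ a ≠ b

theorem isStrictOrder_rootLT (h : GradedRootSystem Δ d Pos) : IsStrictOrder E (RootLT Pos) where
  irrefl _ ha := ha.2 rfl
  trans a b c hab hbc := by
    refine ⟨by simpa using add_mem hbc.1 hab.1, ?_⟩
    rintro rfl
    exact hab.2 (sub_eq_zero.1 (h.eq_zero_of_mem_closure_of_neg_mem_closure hab.1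
      (by rw [neg_sub]; exact hbc.1))).symm

theorem wellFoundedOn_rootLT (h : GradedRootSystem Δ d Pos) : Δ.WellFoundedOn (RootLT Pos) :=
  haveI := h.isStrictOrder_rootLT
  h.finite.wellFoundedOn

theorem mem_closure_simpleRoots (h : GradedRootSystem Δ d Pos) {P : Set E} (hP : P ⊆ Pos)
    {x : E} (hx : x ∈ P) : x ∈ AddSubmonoid.closure (simpleRoots P) := by
  refine h.wellFoundedOn_rootLT.induction (h.pos_subset (hP hx))
    (P := fun x => x ∈ P → x ∈ AddSubmonoid.closure (simpleRoots P)) ?_ hx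
  intro x _ ih hx
  by_cases hs : x ∈ simpleRoots P
  · exact AddSubmonoid.subset_closure hs
  obtain ⟨a, ha, b, hb, rfl⟩ : ∃ a ∈ P, ∃ b ∈ P, x = a + b := by
    by_contra hn
    exact hs ⟨hx, hn⟩
  have hlt : ∀ {a b : E}, b ∈ P → RootLT Pos a (a + b) := fun hb =>
    ⟨by simpa using AddSubmonoid.subset_closure (hP hb),
      fun e => h.nonzero _ (h.pos_subset (hP hb)) (by simpa using e)⟩
  exact add_mem (ih a (h.pos_subset (hP ha)) (hlt hb) ha)
    (ih b (h.pos_subset (hP hb)) (add_comm a b ▸ hlt ha) hb)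

theorem sub_mem_or_sub_mem_of_add_sub_mem (h : GradedRootSystem Δ d Pos) {x y z : E}
    (hx : x ∈ Δ) (hy : y ∈ Δ) (hz : z ∈ Δ) (hxy : x + y ∈ Δ) (hs : x + y - z ∈ Δ) :
    (x - z ∈ Δ ∨ x = z) ∨ (y - z ∈ Δ ∨ y = z) := by
  by_contra hc
  simp only [not_or] at hc
  obtain ⟨⟨hxz, hxz'⟩, hyz, hyz'⟩ := hc
  -- each excluded difference forces an inner product to be `≤ 0`; together `‖x + y‖² ≤ 0`
  have h₁ : ⟪x, z⟫ ≤ 0 := not_lt.1 fun hp => hxz (h.sub_mem_of_inner_pos hx hz hp hxz')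
  have h₂ : ⟪y, z⟫ ≤ 0 := not_lt.1 fun hp => hyz (h.sub_mem_of_inner_pos hy hz hp hyz')
  have h₃ : ⟪x + y - z, x⟫ ≤ 0 := not_lt.1 fun hp => hyz <| by
    have hne : x + y - z ≠ x := fun e => hyz' <| sub_eq_zero.1 <| by
      rw [show y - z = x + y - z - x by abel, e, sub_self]
    simpa [show x + y - z - x = y - z by abel] using h.sub_mem_of_inner_pos hs hx hp hne
  have h₄ : ⟪x + y - z, y⟫ ≤ 0 := not_lt.1 fun hp => hxz <| by
    have hne : x + y - z ≠ y := fun e => hxz' <| sub_eq_zero.1 <| by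
      rw [show x - z = x + y - z - y by abel, e, sub_self]
    simpa [show x + y - z - y = x - z by abel] using h.sub_mem_of_inner_pos hs hy hp hne
  refine h.nonzero _ hxy (real_inner_self_nonpos.1 ?_)
  simp only [inner_add_left, inner_add_right, inner_sub_left] at h₃ h₄ ⊢
  linarith [real_inner_comm x z, real_inner_comm y z, real_inner_comm x y]

theorem grade_sub (h : GradedRootSystem Δ d Pos) {x y : E} (hx : x ∈ Δ) (hy : y ∈ Δ)
    (hxy : x - y ∈ Δ) : d (x - y) = d x - d y := by
  have := h.grade_add _ hxy y hy (by rwa [sub_add_cancel])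
  rw [sub_add_cancel] at this
  omega

theorem grade_nonneg (h : GradedRootSystem Δ d Pos) {x : E} (hx : x ∈ Pos) : 0 ≤ d x := by
  by_contra hneg
  have hxΔ := h.pos_subset hx
  exact (h.pos_iff x hxΔ).1 hx
    (h.compatible _ (h.neg_mem x hxΔ) (by rw [h.grade_neg x hxΔ]; omega))

theorem mem_pos0_or_neg_mem_pos0 (h : GradedRootSystem Δ d Pos) {x : E} (hx : x ∈ Δ)
    (hdx : d x = 0) : x ∈ pos0 d Pos ∨ -x ∈ pos0 d Pos := by
  by_cases hpos : x ∈ Pos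
  · exact Or.inl ⟨hpos, hdx⟩
  · exact Or.inr ⟨not_not.1 (mt (h.pos_iff x hx).2 hpos), by rw [h.grade_neg x hx, hdx, neg_zero]⟩

theorem _root_.IsLowerIdeal.sub_mem_of_mem_pos0 (h : GradedRootSystem Δ d Pos) {i : ℤ}
    {J : Set E} (hJ : IsLowerIdeal Δ d Pos i J) {μ α : E} (hμ : μ ∈ J) (hα : α ∈ pos0 d Pos)
    (hμα : μ - α ∈ Δ) : μ - α ∈ J := by
  obtain ⟨hμΔ, hdμ⟩ := hJ.1 hμ
  refine hJ.2 μ hμ _ ⟨hμα, ?_⟩ ?_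
  · rw [h.grade_sub hμΔ (h.pos_subset hα.1) hμα, hdμ, hα.2, sub_zero]
  · change μ - (μ - α) ∈ _
    rw [sub_sub_cancel]
    exact h.mem_closure_simpleRoots (fun _ hγ => hγ.1) hα

theorem level_subset_pos (h : GradedRootSystem Δ d Pos) {i : ℤ} (hi : 1 ≤ i) :
    level Δ d i ⊆ Pos :=
  fun x hx => h.compatible x hx.1 (hx.2 ▸ hi)

theorem idealPow_succ_subset_level (h : GradedRootSystem Δ d Pos) (hI : I ⊆ level Δ d 1)
    (k : ℕ) : idealPow Δ I (k + 1) ⊆ level Δ d (k + 1) := by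
  induction k with
  | zero => exact hI
  | succ k ih =>
    rintro _ ⟨hxΔ, a, ha, b, hb, rfl⟩
    obtain ⟨haΔ, hda⟩ := hI ha
    obtain ⟨hbΔ, hdb⟩ := ih hb
    refine ⟨hxΔ, ?_⟩
    rw [h.grade_add a haΔ b hbΔ hxΔ, hda, hdb]
    push_cast
    ring

theorem list_sum_mem_idealPow (h : GradedRootSystem Δ d Pos) (hI : I ⊆ Pos) {k : ℕ}
    {L : List E} (hL : ∀ y ∈ L, y ∈ I) (hlen : L.length = k + 1) (hΔ : L.sum ∈ Δ) :
    L.sum ∈ idealPow Δ I (k + 1) := by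
  classical
  induction k generalizing L with
  | zero =>
    obtain ⟨y, rfl⟩ := List.length_eq_one_iff.1 hlen
    rw [List.sum_singleton]
    exact hL y (List.mem_singleton_self y)
  | succ k ih =>
    obtain ⟨β, hβL, hβ⟩ :=
      exists_mem_inner_pos_of_inner_sum_pos (real_inner_self_pos.2 (h.nonzero _ hΔ))
    have hsum : L.sum = β + (L.erase β).sum := by
      rw [(List.perm_cons_erase hβL).sum_eq, List.sum_cons]
    have hlen' : (L.erase β).length = k + 1 := by
      rw [List.length_erase_of_mem hβL, hlen]
      rfl
    have hL' : ∀ y ∈ L.erase β, y ∈ I := fun y hy => hL y (List.mem_of_mem_erase hy)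
    have hne : L.sum ≠ β := by
      intro e
      refine h.list_sum_ne_zero (fun y hy => hI (hL' y hy))
        (List.ne_nil_of_length_pos (by omega)) ?_
      rwa [hsum, add_eq_left] at e
    have hrest : L.sum - β = (L.erase β).sum := by
      rw [hsum, add_sub_cancel_left]
    have hrestΔ := h.sub_mem_of_inner_pos hΔ (h.pos_subset (hI (hL β hβL))) hβ hne
    rw [hrest] at hrestΔ
    exact ⟨hΔ, β, hL β hβL, _, ih hL' hlen' hrestΔ, hsum⟩

theorem isClosedSubset_gen (h : GradedRootSystem Δ d Pos) (hI : I ⊆ Pos) :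
    IsClosedSubset Δ (gen Δ I) := by
  intro γ₁ hγ₁ γ₂ hγ₂ hΔ
  obtain ⟨m, hm⟩ := Set.mem_iUnion.1 hγ₁
  obtain ⟨n, hn⟩ := Set.mem_iUnion.1 hγ₂
  obtain ⟨L₁, hL₁, hlen₁, rfl⟩ := exists_list_of_mem_idealPow hm
  obtain ⟨L₂, hL₂, hlen₂, rfl⟩ := exists_list_of_mem_idealPow hn
  rw [← List.sum_append] at hΔ ⊢
  refine mem_gen_of_mem_idealPow (k := m + n + 1) (h.list_sum_mem_idealPow hI ?_ ?_ hΔ)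
  · simpa only [List.mem_append, or_imp, forall_and] using And.intro hL₁ hL₂
  · rw [List.length_append, hlen₁, hlen₂]
    ring

theorem sub_mem_idealPow (h : GradedRootSystem Δ d Pos) (hI : IsLowerIdeal Δ d Pos 1 I)
    {k : ℕ} {μ α : E} (hμ : μ ∈ idealPow Δ I (k + 1)) (hα : α ∈ pos0 d Pos) (hμα : μ - α ∈ Δ) :
    μ - α ∈ idealPow Δ I (k + 1) := by
  induction k generalizing μ with
  | zero => exact hI.sub_mem_of_mem_pos0 h hμ hα hμα
  | succ k ih =>
    obtain ⟨hμΔ, a, ha, b, hb, rfl⟩ := hμ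
    obtain ⟨haΔ, hda⟩ := hI.1 ha
    obtain ⟨hbΔ, hdb⟩ := h.idealPow_succ_subset_level hI.1 k hb
    rcases h.sub_mem_or_sub_mem_of_add_sub_mem haΔ hbΔ (h.pos_subset hα.1) hμΔ hμα with
      (haα | rfl) | (hbα | rfl)
    · exact ⟨hμα, a - α, hI.sub_mem_of_mem_pos0 h ha hα haα, b, hb, by abel⟩
    · exact absurd (hda.symm.trans hα.2) one_ne_zero
    · exact ⟨hμα, a, ha, b - α, ih hb hbα, by abel⟩
    · have := hα.2
      omega

theorem mem_gen_or_mem_gen_of_sub_mem (h : GradedRootSystem Δ d Pos)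
    (hI : IsLowerIdeal Δ d Pos 1 I) {k : ℕ}
    (ih : ∀ γ ∈ Pos, ∀ ν ∈ Pos, γ + ν ∈ idealPow Δ I (k + 1) → γ ∈ gen Δ I ∨ ν ∈ gen Δ I)
    {a b γ ν : E} (ha : a ∈ I) (hb : b ∈ idealPow Δ I (k + 1)) (hγ : γ ∈ Pos) (hν : ν ∈ Pos)
    (hdν : 1 ≤ d ν) (hsum : γ + ν = a + b) (haν : a - ν ∈ Δ ∨ a = ν) :
    γ ∈ gen Δ I ∨ ν ∈ gen Δ I := by
  obtain ⟨haΔ, hda⟩ := hI.1 ha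
  have hνΔ := h.pos_subset hν
  rcases haν with haν | rfl
  swap
  · exact Or.inr (mem_gen_of_mem_idealPow (k := 0) ha)
  have hb' : b = γ + (ν - a) := by
    rw [eq_sub_of_add_eq' hsum.symm]
    abel
  have hνa : ν - a ∈ Δ := neg_sub a ν ▸ h.neg_mem _ haν
  rcases hdν.eq_or_lt with hdν | hdν
  · rcases h.mem_pos0_or_neg_mem_pos0 haν (by rw [h.grade_sub haΔ hνΔ haν]; omega) with
      hpos | hneg
    · have := hI.sub_mem_of_mem_pos0 h ha hpos (by rwa [sub_sub_cancel])
      rw [sub_sub_cancel] at this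
      exact Or.inr (mem_gen_of_mem_idealPow (k := 0) this)
    · rw [neg_sub] at hneg
      have := h.sub_mem_idealPow hI hb hneg
        (by rw [hb', add_sub_cancel_right]; exact h.pos_subset hγ)
      rw [hb', add_sub_cancel_right] at this
      exact Or.inl (mem_gen_of_mem_idealPow this)
  · have hνaP : ν - a ∈ Pos := h.compatible _ hνa (by rw [h.grade_sub hνΔ haΔ hνa]; omega)
    refine (ih γ hγ (ν - a) hνaP (hb' ▸ hb)).imp_right fun hνa' => ?_
    have := h.isClosedSubset_gen (hI.1.trans (h.level_subset_pos le_rfl)) a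
      (mem_gen_of_mem_idealPow (k := 0) ha) (ν - a) hνa' (by rwa [add_sub_cancel])
    rwa [add_sub_cancel] at this

theorem mem_gen_or_mem_gen_of_add_mem_idealPow (h : GradedRootSystem Δ d Pos)
    (hI : IsLowerIdeal Δ d Pos 1 I) (k : ℕ) :
    ∀ γ ∈ Pos, ∀ ν ∈ Pos, γ + ν ∈ idealPow Δ I (k + 1) → γ ∈ gen Δ I ∨ ν ∈ gen Δ I := by
  induction k using Nat.strong_induction_on with
  | _ k ih =>
      intro γ hγ ν hν hμ
      have hγΔ := h.pos_subset hγ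
      have hνΔ := h.pos_subset hν
      obtain ⟨hμΔ, hdμ⟩ := h.idealPow_succ_subset_level hI.1 k hμ
      rw [h.grade_add γ hγΔ ν hνΔ hμΔ] at hdμ
      rcases (h.grade_nonneg hν).eq_or_lt with hdν | hdν
      · have := h.sub_mem_idealPow hI hμ ⟨hν, hdν.symm⟩ (by rwa [add_sub_cancel_right])
        rw [add_sub_cancel_right] at this
        exact Or.inl (mem_gen_of_mem_idealPow this)
      rcases (h.grade_nonneg hγ).eq_or_lt with hdγ | hdγ
      · have := h.sub_mem_idealPow hI hμ ⟨hγ, hdγ.symm⟩ (by rwa [add_sub_cancel_left])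
        rw [add_sub_cancel_left] at this
        exact Or.inr (mem_gen_of_mem_idealPow this)
      obtain ⟨k, rfl⟩ : ∃ k', k = k' + 1 := ⟨k - 1, by omega⟩
      obtain ⟨-, a, ha, b, hb, hsum⟩ := hμ
      have ih' := ih k k.lt_succ_self
      rcases h.sub_mem_or_sub_mem_of_add_sub_mem (hI.1 ha).1
          (h.idealPow_succ_subset_level hI.1 k hb).1 hνΔ (hsum ▸ hμΔ)
          (by rwa [← hsum, add_sub_cancel_right]) with haν | hbν
      · exact h.mem_gen_or_mem_gen_of_sub_mem hI ih' ha hb hγ hν hdν hsum haν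
      -- `b - ν = -(a - γ)`: the first case with `γ` and `ν` exchanged
      · have e : a - γ = -(b - ν) := by
          rw [neg_sub, sub_eq_sub_iff_add_eq_add, ← hsum, add_comm]
        refine (h.mem_gen_or_mem_gen_of_sub_mem hI ih' ha hb hν hγ hdγ
          (by rw [add_comm, hsum]) ?_).symm
        rcases hbν with hbν | rfl
        · exact Or.inl (e ▸ h.neg_mem _ hbν)
        · exact Or.inr (sub_eq_zero.1 (by rw [e, sub_self, neg_zero]))

theorem isClosedSubset_pos_diff_gen (h : GradedRootSystem Δ d Pos)
    (hI : IsLowerIdeal Δ d Pos 1 I) : IsClosedSubset Δ (Pos \ gen Δ I) := by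
  rintro γ₁ ⟨hγ₁, hγ₁'⟩ γ₂ ⟨hγ₂, hγ₂'⟩ hΔ
  refine ⟨h.pos_add γ₁ hγ₁ γ₂ hγ₂ hΔ, fun hmem => ?_⟩
  obtain ⟨k, hk⟩ := Set.mem_iUnion.1 hmem
  rcases h.mem_gen_or_mem_gen_of_add_mem_idealPow hI k γ₁ hγ₁ γ₂ hγ₂ hk with h₁ | h₂
  exacts [hγ₁' h₁, hγ₂' h₂]

end GradedRootSystem

end

/-- If `I` is a lower ideal of `Δ(1)`, then `⟨I⟩` is a bi-convex subset of `Δ⁺`. -/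
theorem stmt4 (Δ : Set V) (d : V → ℤ) (Pos : Set V)
    (h : GradedRootSystem Δ d Pos) (I : Set V)
    (hI : IsLowerIdeal Δ d Pos 1 I) :
    IsBiConvex Δ Pos (gen Δ I) :=
  ⟨h.isClosedSubset_gen (hI.1.trans (h.level_subset_pos le_rfl)),
    h.isClosedSubset_pos_diff_gen hI⟩
end

section
/- Let I be a lower ideal of Δ(1) and let w = w_{I,max} ∈ W⁰ be the unique element with N(w) = Δ(≥1) \ ⟨I^c⟩. For γ ∈ Δ(1), one has γ ∈ min(Δ(1) \ I) if and only if w(γ) ∈ Π. -/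
open RealInnerProductSpace

variable {V : Type*} [NormedAddCommGroup V] [InnerProductSpace ℝ V] [FiniteDimensional ℝ V]

/-!
Let `Φ = w⁻¹(Δ⁺)`. The hypothesis on `N(w)` says that the roots of positive degree in `Φ` are
exactly those of `⟨Iᶜ⟩`, and `w ∈ W⁰` gives `Φ ∩ Δ(0) = Δ(0)⁺`.

If `w γ = a + b` with `a, b ∈ Δ⁺`, then `γ = μ + ν` with `μ, ν ∈ Φ` and, say, `d ν ≥ 1`. When
`d ν ≥ 2`, write `ν = τ + y` with `τ ∈ Iᶜ`, `y ∈ ⟨Iᶜ⟩`; since `μ + τ + y` and `τ + y` are roots,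
`μ + τ` or `μ + y` is a root, hence lies in `Φ`, and regrouping lowers `d ν`. One ends with
`γ = ε + τ`, `ε ∈ Δ(0)⁺`, `τ ∈ Iᶜ`, so `τ ≺ γ` and `γ` is not minimal.

Conversely, if `ν ≺ γ` with `ν ∈ Iᶜ`, then `w γ = w ν + ∑ w αᵢ` with `αᵢ ∈ Π(0)` is a sum of at
least two positive roots, and such a root is never simple.
-/

section

omit [FiniteDimensional ℝ V]

theorem sref_apply (α v : V) : sref α v = v - (2 * ⟪v, α⟫ / ⟪α, α⟫) • α := by
  change Submodule.reflection _ v = _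
  rw [Submodule.reflection_apply, Submodule.starProjection_orthogonal_val,
    Submodule.starProjection_singleton (𝕜 := ℝ), real_inner_self_eq_norm_sq, real_inner_comm v α,
    two_smul]
  simp only [RCLike.ofReal_real_eq_id, id_eq]
  module

theorem sref_sref (α v : V) : sref α (sref α v) = v :=
  Submodule.reflection_reflection _ v

theorem exists_mem_inner_pos_of_inner_sum_pos_s8 {x : V} {m : Multiset V}
    (hm : 0 < ⟪x, m.sum⟫) : ∃ t ∈ m, 0 < ⟪x, t⟫ := by
  by_contra! hle
  have hsum : ⟪x, m.sum⟫ = (m.map (⟪x, ·⟫)).sum := map_multiset_sum (innerₛₗ ℝ x) m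
  have : 0 ≤ (m.map (-⟪x, ·⟫)).sum :=
    Multiset.sum_nonneg (by simpa using fun t ht => hle t ht)
  rw [Multiset.sum_map_neg] at this
  linarith

omit [InnerProductSpace ℝ V] in
theorem subset_closure_simpleRoots {S : Set V} (hS : S.Finite)
    (hS0 : ∀ m : Multiset V, m ≠ 0 → (∀ t ∈ m, t ∈ S) → m.sum ≠ 0) :
    S ⊆ AddSubmonoid.closure (simpleRoots S) := by
  have : Finite S := hS.to_subtype
  let r : S → S → Prop := fun p q => (q : V) - p ∈ S
  have hchain : ∀ {p q : S}, Relation.TransGen r p q →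
      ∃ m : Multiset V, m ≠ 0 ∧ (∀ t ∈ m, t ∈ S) ∧ (q : V) - p = m.sum := by
    intro p q hpq
    induction hpq with
    | single hr => exact ⟨{_}, Multiset.singleton_ne_zero _, by simpa using hr, by simp⟩
    | @tail b c _ hr ih =>
      obtain ⟨m, -, hmS, hsum⟩ := ih
      refine ⟨((c : V) - b) ::ₘ m, Multiset.cons_ne_zero, ?_, ?_⟩
      · simpa using ⟨hr, hmS⟩
      · rw [Multiset.sum_cons, ← hsum]; abel
  -- a cycle of `r` would be a nonempty family of elements of `S` summing to zero
  have : Std.Irrefl (Relation.TransGen r) := ⟨fun p hp => by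
    obtain ⟨m, hm0, hmS, hsum⟩ := hchain hp
    exact hS0 m hm0 hmS (by rw [← hsum, sub_self])⟩
  have hwf : WellFounded r :=
    Subrelation.wf Relation.TransGen.single (Finite.wellFounded_of_trans_of_irrefl _)
  suffices ∀ p : S, (p : V) ∈ AddSubmonoid.closure (simpleRoots S) from fun x hx => this ⟨x, hx⟩
  intro p
  induction p using hwf.induction with
  | _ q ih =>
    by_cases hq : (q : V) ∈ simpleRoots S
    · exact AddSubmonoid.subset_closure hq
    obtain ⟨a, ha, b, hb, hab⟩ : ∃ a ∈ S, ∃ b ∈ S, (q : V) = a + b := by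
      by_contra hc
      exact hq ⟨q.2, hc⟩
    rw [hab]
    exact add_mem (ih ⟨a, ha⟩ (by simpa [r, hab] using hb))
      (ih ⟨b, hb⟩ (by simpa [r, hab] using ha))

variable {Δ : Set V} {d : V → ℤ} {Pos : Set V} {J : Set V}

omit [InnerProductSpace ℝ V] in
theorem subset_gen : J ⊆ gen Δ J := fun _ hx => Set.mem_iUnion.2 ⟨0, hx⟩

namespace GradedRootSystem

theorem apply_mem_iff_of_mem_weyl (h : GradedRootSystem Δ d Pos) {u : V ≃ₗ[ℝ] V}
    (hu : u ∈ weyl Δ) : ∀ x, u x ∈ Δ ↔ x ∈ Δ := by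
  induction hu using Subgroup.closure_induction with
  | mem g hg =>
    obtain ⟨α, hα, rfl⟩ := hg
    have hmaps : ∀ y ∈ Δ, sref α y ∈ Δ := fun y hy => sref_apply α y ▸ h.reflect_mem α hα y hy
    exact fun x => ⟨fun hx => sref_sref α x ▸ hmaps _ hx, hmaps x⟩
  | one => exact fun x => Iff.rfl
  | mul u v _ _ ihu ihv => exact fun x => (ihu (v x)).trans (ihv x)
  | inv u _ ihu =>
    exact fun x => (ihu _).symm.trans (by rw [show u (u⁻¹ x) = x from u.apply_symm_apply x])

theorem neg_mem_pos_iff (h : GradedRootSystem Δ d Pos) {x : V} (hx : x ∈ Δ) :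
    -x ∈ Pos ↔ x ∉ Pos := by
  rw [h.pos_iff _ (h.neg_mem x hx), neg_neg]

theorem sub_mem_or_eq_of_inner_pos (h : GradedRootSystem Δ d Pos) {α β : V} (hα : α ∈ Δ)
    (hβ : β ∈ Δ) (hαβ : 0 < ⟪α, β⟫) : α - β ∈ Δ ∨ α = β := by
  obtain ⟨n, hn⟩ := h.crystallographic β hβ α hα
  obtain ⟨m, hm⟩ := h.crystallographic α hα β hβ
  have hαα : 0 < ⟪α, α⟫ := real_inner_self_pos.2 (h.nonzero α hα)
  have hββ : 0 < ⟪β, β⟫ := real_inner_self_pos.2 (h.nonzero β hβ)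
  have hn' : (n : ℝ) * ⟪β, β⟫ = 2 * ⟪α, β⟫ := by rw [hn]; field_simp
  have hm' : (m : ℝ) * ⟪α, α⟫ = 2 * ⟪α, β⟫ := by rw [hm, real_inner_comm]; field_simp
  have hn0 : 0 < n := by exact_mod_cast (by nlinarith : (0 : ℝ) < n)
  have hm0 : 0 < m := by exact_mod_cast (by nlinarith : (0 : ℝ) < m)
  rcases (by omega : n = 1 ∨ m = 1 ∨ (2 ≤ n ∧ 2 ≤ m)) with rfl | rfl | ⟨hn2, hm2⟩
  · have hrefl := h.reflect_mem β hβ α hα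
    rw [← hn, Int.cast_one, one_smul] at hrefl
    exact .inl hrefl
  · have hrefl := h.neg_mem _ (h.reflect_mem α hα β hβ)
    rw [← hm, Int.cast_one, one_smul, neg_sub] at hrefl
    exact .inl hrefl
  · -- `n m ≥ 4` forces equality in Cauchy–Schwarz, so `β` is a positive multiple of `α`
    right
    have hnm : (4 : ℝ) ≤ n * m := by exact_mod_cast (by nlinarith : 4 ≤ n * m)
    have hprod : (n * m : ℝ) * (⟪α, α⟫ * ⟪β, β⟫) = 4 * ⟪α, β⟫ ^ 2 := by
      linear_combination (m * ⟪α, α⟫) * hn' + (2 * ⟪α, β⟫) * hm'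
    have hsq : ⟪α, β⟫ ^ 2 = (‖α‖ * ‖β‖) ^ 2 := by
      have := real_inner_mul_inner_self_le α β
      rw [mul_pow, ← real_inner_self_eq_norm_sq, ← real_inner_self_eq_norm_sq]
      nlinarith [mul_le_mul_of_nonneg_right hnm (mul_pos hαα hββ).le]
    have hcs : ⟪α, β⟫ / (‖α‖ * ‖β‖) = 1 := by
      rw [(sq_eq_sq₀ hαβ.le (by positivity)).1 hsq, div_self]
      exact mul_ne_zero (norm_ne_zero_iff.2 (h.nonzero α hα)) (norm_ne_zero_iff.2 (h.nonzero β hβ))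
    obtain ⟨-, c, hc, rfl⟩ := (real_inner_div_norm_mul_norm_eq_one_iff α β).1 hcs
    rcases h.reduced α hα c hβ with rfl | rfl
    · simp
    · linarith

theorem add_mem_or_eq_neg_of_inner_neg (h : GradedRootSystem Δ d Pos) {α β : V} (hα : α ∈ Δ)
    (hβ : β ∈ Δ) (hαβ : ⟪α, β⟫ < 0) : α + β ∈ Δ ∨ α = -β := by
  simpa using h.sub_mem_or_eq_of_inner_pos hα (h.neg_mem β hβ) (by simpa [inner_neg_right])

theorem add_mem_or_add_mem_of_add_add_mem (h : GradedRootSystem Δ d Pos) {a b c : V}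
    (ha : a ∈ Δ) (hb : b ∈ Δ) (hc : c ∈ Δ) (hbc : b + c ∈ Δ) (habc : a + b + c ∈ Δ) :
    (a + b ∈ Δ ∨ a = -b) ∨ (a + c ∈ Δ ∨ a = -c) := by
  have hpos : 0 < ⟪b + c, b + c⟫ := real_inner_self_pos.2 (h.nonzero _ hbc)
  have hexp : ⟪b + c, b + c⟫ = ⟪a + b + c, b⟫ + ⟪a + b + c, c⟫ - ⟪a, b⟫ - ⟪a, c⟫ := by
    simp only [inner_add_left, inner_add_right, real_inner_comm b c]; ring
  rcases (by by_contra!; linarith :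
      0 < ⟪a + b + c, b⟫ ∨ 0 < ⟪a + b + c, c⟫ ∨ ⟪a, b⟫ < 0 ∨ ⟪a, c⟫ < 0) with hi | hi | hi | hi
  · refine .inr ((h.sub_mem_or_eq_of_inner_pos habc hb hi).imp (fun hs => ?_) fun he => ?_)
    · convert hs using 1; abel
    · linear_combination (norm := module) he
  · refine .inl ((h.sub_mem_or_eq_of_inner_pos habc hc hi).imp (fun hs => ?_) fun he => ?_)
    · convert hs using 1; abel
    · linear_combination (norm := module) he
  · exact .inl (h.add_mem_or_eq_neg_of_inner_neg ha hb hi)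
  · exact .inr (h.add_mem_or_eq_neg_of_inner_neg ha hc hi)

theorem multiset_sum_ne_zero (h : GradedRootSystem Δ d Pos) {m : Multiset V} (hm0 : m ≠ 0)
    (hm : ∀ t ∈ m, t ∈ Pos) : m.sum ≠ 0 := by
  induction hn : m.card using Nat.strong_induction_on generalizing m with
  | _ n ih =>
  intro hsum
  obtain ⟨a, ha⟩ := Multiset.exists_mem_of_ne_zero hm0
  obtain ⟨r, rfl⟩ := Multiset.exists_cons_of_mem ha
  have haP := hm a (Multiset.mem_cons_self a r)
  have haΔ := h.pos_subset haP
  have hneg : 0 < ⟪-a, r.sum⟫ := by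
    have h0 : ⟪a, a⟫ + ⟪a, r.sum⟫ = 0 := by
      rw [← inner_add_right, ← Multiset.sum_cons, hsum, inner_zero_right]
    rw [inner_neg_left]
    linarith [real_inner_self_pos.2 (h.nonzero a haΔ)]
  obtain ⟨b, hb, hab⟩ := exists_mem_inner_pos_of_inner_sum_pos_s8 hneg
  rw [inner_neg_left, neg_pos] at hab
  obtain ⟨s, rfl⟩ := Multiset.exists_cons_of_mem hb
  have hbP := hm b (by simp)
  have habP : a + b ∈ Pos := by
    rcases h.add_mem_or_eq_neg_of_inner_neg haΔ (h.pos_subset hbP) hab with hΔ | rfl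
    · exact h.pos_add a haP b hbP hΔ
    · exact absurd haP ((h.pos_iff b (h.pos_subset hbP)).1 hbP)
  refine @ih _ ?_ ((a + b) ::ₘ s) Multiset.cons_ne_zero ?_ rfl ?_
  · simp [← hn]
  · simpa [habP] using fun t ht => hm t (by simp [ht])
  · simpa [add_assoc] using hsum

theorem mem_pos_of_eq_multiset_sum (h : GradedRootSystem Δ d Pos) {x : V} {m : Multiset V}
    (hx : x ∈ Δ) (hm : ∀ t ∈ m, t ∈ Pos) (hxm : x = m.sum) : x ∈ Pos := by
  by_contra hxP
  refine h.multiset_sum_ne_zero (m := -x ::ₘ m) Multiset.cons_ne_zero ?_ ?_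
  · simpa [(h.neg_mem_pos_iff hx).2 hxP] using hm
  · rw [Multiset.sum_cons, ← hxm, neg_add_cancel]

theorem notMem_simpleRoots_of_eq_multiset_sum (h : GradedRootSystem Δ d Pos) {x : V}
    {m : Multiset V} (hm : ∀ t ∈ m, t ∈ Pos) (hxm : x = m.sum) (hcard : 2 ≤ m.card) :
    x ∉ simpleRoots Pos := by
  rintro ⟨hxP, hx_simple⟩
  have hx := h.pos_subset hxP
  obtain ⟨t, ht, hxt⟩ := exists_mem_inner_pos_of_inner_sum_pos_s8 (x := x) (m := m)
    (hxm ▸ real_inner_self_pos.2 (h.nonzero x hx))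
  obtain ⟨r, rfl⟩ := Multiset.exists_cons_of_mem ht
  have hr : ∀ s ∈ r, s ∈ Pos := fun s hs => hm s (Multiset.mem_cons_of_mem hs)
  have hxr : x - t = r.sum := by rw [hxm, Multiset.sum_cons]; abel
  rcases h.sub_mem_or_eq_of_inner_pos hx (h.pos_subset (hm t ht)) hxt with hΔ | rfl
  · exact hx_simple ⟨t, hm t ht, x - t, h.mem_pos_of_eq_multiset_sum hΔ hr hxr, by abel⟩
  · refine h.multiset_sum_ne_zero (m := r) ?_ hr (by rw [← hxr, sub_self])
    rintro rfl
    simp at hcard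

theorem leLevel_of_sub_mem_pos0 (h : GradedRootSystem Δ d Pos) {x y : V}
    (hxy : y - x ∈ pos0 d Pos) : leLevel d Pos x y :=
  subset_closure_simpleRoots (h.finite.subset fun _ hε => h.pos_subset hε.1)
    (fun _ hm0 hm => h.multiset_sum_ne_zero hm0 fun t ht => (hm t ht).1) hxy

theorem mem_pos0_of_apply_mem_pos (h : GradedRootSystem Δ d Pos) {w : V →ₗ[ℝ] V}
    (hw0 : ∀ ε ∈ pos0 d Pos, w ε ∈ Pos) {x : V} (hx : x ∈ Δ) (hdx : d x = 0)
    (hwx : w x ∈ Pos) : x ∈ pos0 d Pos := by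
  refine ⟨by_contra fun hxP => ?_, hdx⟩
  have hwnx := hw0 (-x) ⟨(h.neg_mem_pos_iff hx).2 hxP, by rw [h.grade_neg x hx, hdx, neg_zero]⟩
  rw [map_neg, h.neg_mem_pos_iff (h.pos_subset hwx)] at hwnx
  exact hwnx hwx

theorem idealPow_subset_level (h : GradedRootSystem Δ d Pos) (hJ : J ⊆ level Δ d 1) :
    ∀ k : ℕ, idealPow Δ J (k + 1) ⊆ level Δ d (k + 1)
  | 0 => by simpa [idealPow] using hJ
  | k + 1 => by
    rintro x ⟨hx, a, ha, b, hb, rfl⟩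
    obtain ⟨haΔ, hda⟩ := hJ ha
    obtain ⟨hbΔ, hdb⟩ := idealPow_subset_level h hJ k hb
    exact ⟨hx, by rw [h.grade_add a haΔ b hbΔ hx, hda, hdb]; push_cast; ring⟩

theorem gen_subset_levelGE (h : GradedRootSystem Δ d Pos) (hJ : J ⊆ level Δ d 1) :
    gen Δ J ⊆ levelGE Δ d 1 := by
  intro x hx
  obtain ⟨k, hk⟩ := Set.mem_iUnion.1 hx
  obtain ⟨hxΔ, hdx⟩ := h.idealPow_subset_level hJ k hk
  exact ⟨hxΔ, by omega⟩

theorem mem_of_mem_gen_of_level_eq_one (h : GradedRootSystem Δ d Pos) (hJ : J ⊆ level Δ d 1)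
    {x : V} (hx : x ∈ gen Δ J) (hdx : d x = 1) : x ∈ J := by
  obtain ⟨k, hk⟩ := Set.mem_iUnion.1 hx
  obtain rfl : k = 0 := by have := (h.idealPow_subset_level hJ k hk).2; omega
  exact hk

theorem exists_add_of_mem_gen (h : GradedRootSystem Δ d Pos) (hJ : J ⊆ level Δ d 1)
    {x : V} (hx : x ∈ gen Δ J) (hdx : 2 ≤ d x) : ∃ τ ∈ J, ∃ y ∈ gen Δ J, x = τ + y := by
  obtain ⟨k, hk⟩ := Set.mem_iUnion.1 hx
  obtain ⟨k, rfl⟩ : ∃ j, k = j + 1 := ⟨k - 1, by have := (h.idealPow_subset_level hJ k hk).2; omega⟩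
  obtain ⟨-, τ, hτ, y, hy, rfl⟩ := hk
  exact ⟨τ, hτ, y, Set.mem_iUnion.2 ⟨k, hy⟩, rfl⟩

section PositiveSystem

variable {Φ : Set V} (hΦ : Φ ⊆ Δ) (hclosed : IsClosedSubset Δ Φ) (hneg : ∀ x ∈ Φ, -x ∉ Φ)
  (hsplit : ∀ x ∈ Φ, 2 ≤ d x → ∃ τ ∈ Φ, ∃ y ∈ Φ, d τ = 1 ∧ x = τ + y)
include hΦ hclosed hneg hsplit

theorem exists_level_zero_add_level_one_of_level_eq (h : GradedRootSystem Δ d Pos) (n : ℕ) :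
    ∀ μ ∈ Φ, ∀ ν ∈ Φ, μ + ν ∈ Δ → d (μ + ν) = 1 → d ν = n + 1 →
      ∃ x ∈ Φ, ∃ τ ∈ Φ, d x = 0 ∧ d τ = 1 ∧ μ + ν = x + τ := by
  induction n using Nat.strong_induction_on with
  | _ n ih =>
  intro μ hμ ν hν hγ hdγ hdν
  have hdμ : d μ = -n := by have := h.grade_add μ (hΦ hμ) ν (hΦ hν) hγ; omega
  rcases n with _ | n
  · exact ⟨μ, hμ, ν, hν, by simpa using hdμ, by simpa using hdν, rfl⟩
  obtain ⟨τ, hτ, y, hy, hdτ, rfl⟩ := hsplit ν hν (by omega)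
  have hdy : d y = n + 1 := by have := h.grade_add τ (hΦ hτ) y (hΦ hy) (hΦ hν); omega
  have hμ_add : ∀ c ∈ Φ, μ + c ∈ Δ ∨ μ = -c → μ + c ∈ Φ := by
    rintro c hc (hΔ | rfl)
    · exact hclosed μ hμ c hc hΔ
    · exact absurd hμ (hneg c hc)
  rcases h.add_mem_or_add_mem_of_add_add_mem (hΦ hμ) (hΦ hτ) (hΦ hy) (hΦ hν)
    (by rwa [add_assoc]) with hμτ | hμy
  · rw [← add_assoc] at hγ hdγ ⊢
    exact ih n (by omega) (μ + τ) (hμ_add τ hτ hμτ) y hy hγ hdγ hdy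
  · rw [show μ + (τ + y) = μ + y + τ by abel] at hγ hdγ ⊢
    exact ih 0 (by omega) (μ + y) (hμ_add y hy hμy) τ hτ hγ hdγ (by simpa using hdτ)

theorem exists_level_zero_add_level_one (h : GradedRootSystem Δ d Pos) {μ ν : V} (hμ : μ ∈ Φ)
    (hν : ν ∈ Φ) (hγ : μ + ν ∈ Δ) (hdγ : d (μ + ν) = 1) :
    ∃ x ∈ Φ, ∃ τ ∈ Φ, d x = 0 ∧ d τ = 1 ∧ μ + ν = x + τ := by
  have hd : d μ + d ν = 1 := by rw [← hdγ, h.grade_add μ (hΦ hμ) ν (hΦ hν) hγ]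
  rcases le_or_gt 1 (d ν) with hdν | hdν
  · exact exists_level_zero_add_level_one_of_level_eq hΦ hclosed hneg hsplit h (d ν - 1).toNat
      μ hμ ν hν hγ hdγ (by omega)
  · rw [add_comm] at hγ hdγ ⊢
    exact exists_level_zero_add_level_one_of_level_eq hΦ hclosed hneg hsplit h (d μ - 1).toNat
      ν hν μ hμ hγ hdγ (by omega)

end PositiveSystem

theorem mem_iff_apply_mem_pos_of_invSet_eq (h : GradedRootSystem Δ d Pos) {w : V ≃ₗ[ℝ] V}
    {M : Set V} (hwΔ : ∀ x, w x ∈ Δ ↔ x ∈ Δ) (hN : invSet Pos w = levelGE Δ d 1 \ M) {x : V}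
    (hx : x ∈ Δ) (hdx : 1 ≤ d x) : x ∈ M ↔ w x ∈ Pos := by
  have hinv : x ∈ invSet Pos w ↔ x ∉ M := by
    rw [hN]
    exact ⟨fun hxN => hxN.2, fun hxM => ⟨⟨hx, hdx⟩, hxM⟩⟩
  change x ∈ Pos ∧ -(w x) ∈ Pos ↔ _ at hinv
  rw [h.neg_mem_pos_iff ((hwΔ x).2 hx)] at hinv
  have := h.compatible x hx hdx
  tauto

theorem eq_of_leLevel_of_apply_mem_simpleRoots (h : GradedRootSystem Δ d Pos) {w : V →ₗ[ℝ] V}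
    (hw0 : ∀ ε ∈ pos0 d Pos, w ε ∈ Pos) {γ ν : V} (hwγ : w γ ∈ simpleRoots Pos)
    (hwν : w ν ∈ Pos) (hle : leLevel d Pos ν γ) : ν = γ := by
  obtain ⟨m, hm, hsum⟩ := AddSubmonoid.exists_multiset_of_mem_closure hle
  rcases Multiset.empty_or_exists_mem m with rfl | ⟨t, ht⟩
  · rw [Multiset.sum_zero, eq_comm, sub_eq_zero] at hsum
    exact hsum.symm
  refine absurd hwγ (h.notMem_simpleRoots_of_eq_multiset_sum (m := w ν ::ₘ m.map w) ?_ ?_ ?_)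
  · simpa [hwν] using fun s hs => hw0 s (hm s hs).1
  · rw [Multiset.sum_cons, ← map_multiset_sum, hsum, ← map_add, add_sub_cancel]
  · rw [Multiset.card_cons, Multiset.card_map]
    exact Nat.succ_le_succ (Multiset.card_pos_iff_exists_mem.2 ⟨t, ht⟩)

theorem apply_mem_simpleRoots_of_minimal (h : GradedRootSystem Δ d Pos) {w : V ≃ₗ[ℝ] V}
    (hJ : J ⊆ level Δ d 1) (hwΔ : ∀ x, w x ∈ Δ ↔ x ∈ Δ) (hw0 : ∀ ε ∈ pos0 d Pos, w ε ∈ Pos)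
    (hgen : ∀ x ∈ Δ, 1 ≤ d x → (x ∈ gen Δ J ↔ w x ∈ Pos)) {γ : V} (hγ : γ ∈ J)
    (hmin : ∀ ν ∈ J, leLevel d Pos ν γ → ν = γ) : w γ ∈ simpleRoots Pos := by
  obtain ⟨hγΔ, hdγ⟩ := hJ hγ
  refine ⟨(hgen γ hγΔ hdγ.ge).1 (subset_gen hγ), ?_⟩
  rintro ⟨a, ha, b, hb, hab⟩
  let Φ : Set V := {x ∈ Δ | w x ∈ Pos}
  have hclosed : IsClosedSubset Δ Φ := fun x hx y hy hxy =>
    ⟨hxy, map_add w x y ▸ h.pos_add _ hx.2 _ hy.2 (map_add w x y ▸ (hwΔ _).2 hxy)⟩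
  have hneg : ∀ x ∈ Φ, -x ∉ Φ := fun x hx hnx =>
    (h.neg_mem_pos_iff (h.pos_subset hx.2)).1 (map_neg w x ▸ hnx.2) hx.2
  have hsplit : ∀ x ∈ Φ, 2 ≤ d x → ∃ τ ∈ Φ, ∃ y ∈ Φ, d τ = 1 ∧ x = τ + y := by
    rintro x ⟨hx, hwx⟩ hdx
    obtain ⟨τ, hτ, y, hy, rfl⟩ := h.exists_add_of_mem_gen hJ ((hgen x hx (by omega)).2 hwx) hdx
    obtain ⟨hτΔ, hdτ⟩ := hJ hτ
    obtain ⟨hyΔ, hdy⟩ := h.gen_subset_levelGE hJ hy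
    exact ⟨τ, ⟨hτΔ, (hgen τ hτΔ hdτ.ge).1 (subset_gen hτ)⟩, y, ⟨hyΔ, (hgen y hyΔ hdy).1 hy⟩,
      hdτ, rfl⟩
  have hpreimage : ∀ p ∈ Pos, w.symm p ∈ Φ := fun p hp =>
    ⟨(hwΔ _).1 (by simpa using h.pos_subset hp), by simpa using hp⟩
  have hγ_eq : γ = w.symm a + w.symm b := by rw [← map_add, ← hab, LinearEquiv.symm_apply_apply]
  obtain ⟨x, ⟨hxΔ, hwx⟩, τ, ⟨hτΔ, hwτ⟩, hdx, hdτ, hγxτ⟩ :=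
    h.exists_level_zero_add_level_one (fun _ hx => hx.1) hclosed hneg hsplit
      (hpreimage a ha) (hpreimage b hb) (hγ_eq ▸ hγΔ) (hγ_eq ▸ hdγ)
  rw [← hγ_eq] at hγxτ
  have hτJ : τ ∈ J := h.mem_of_mem_gen_of_level_eq_one hJ ((hgen τ hτΔ hdτ.ge).2 hwτ) hdτ
  have hτγ : τ = γ := hmin τ hτJ <| h.leLevel_of_sub_mem_pos0 <| by
    rw [hγxτ, add_sub_cancel_right]
    exact h.mem_pos0_of_apply_mem_pos (w := w.toLinearMap) hw0 hxΔ hdx hwx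
  exact h.nonzero x hxΔ (by rw [hτγ] at hγxτ; simpa using hγxτ)

end GradedRootSystem

end

theorem stmt8_general (Δ : Set V) (d : V → ℤ) (Pos : Set V)
    (h : GradedRootSystem Δ d Pos) (I : Set V)
    (w : V ≃ₗ[ℝ] V) (hw : w ∈ W0 Δ d Pos)
    (hN : invSet Pos w = levelGE Δ d 1 \ gen Δ (level Δ d 1 \ I)) :
    ∀ γ ∈ level Δ d 1,
      ((γ ∈ level Δ d 1 \ I ∧ ∀ ν ∈ level Δ d 1 \ I, leLevel d Pos ν γ → ν = γ) ↔
        w γ ∈ simpleRoots Pos) := by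
  intro γ hγ
  obtain ⟨hwW, hw0⟩ := hw
  have hJ : level Δ d 1 \ I ⊆ level Δ d 1 := fun _ hx => hx.1
  have hwΔ := h.apply_mem_iff_of_mem_weyl hwW
  have hgen : ∀ x ∈ Δ, 1 ≤ d x → (x ∈ gen Δ (level Δ d 1 \ I) ↔ w x ∈ Pos) :=
    fun x hx hdx => h.mem_iff_apply_mem_pos_of_invSet_eq hwΔ hN hx hdx
  have hlevel : ∀ x ∈ level Δ d 1, x ∈ level Δ d 1 \ I ↔ w x ∈ Pos := fun x hx =>
    ⟨fun hxJ => (hgen x hx.1 hx.2.ge).1 (subset_gen hxJ),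
      fun hwx => h.mem_of_mem_gen_of_level_eq_one hJ ((hgen x hx.1 hx.2.ge).2 hwx) hx.2⟩
  refine ⟨fun ⟨hγJ, hmin⟩ => h.apply_mem_simpleRoots_of_minimal hJ hwΔ hw0 hgen hγJ hmin,
    fun hwγ => ⟨(hlevel γ hγ).2 hwγ.1, fun ν hν hle => ?_⟩⟩
  exact h.eq_of_leLevel_of_apply_mem_simpleRoots (w := w.toLinearMap) hw0 hwγ
    ((hlevel ν hν.1).1 hν) hle

/-- If `w = w_{I,max}` (the element of `W⁰` with `N(w) = Δ(≥1) \\ ⟨Iᶜ⟩`), then for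
`γ ∈ Δ(1)`, `γ` is a minimal element of `Δ(1) \\ I` iff `w(γ) ∈ Π`. -/
theorem stmt8 (Δ : Set V) (d : V → ℤ) (Pos : Set V)
    (h : GradedRootSystem Δ d Pos) (I : Set V)
    (hI : IsLowerIdeal Δ d Pos 1 I)
    (w : V ≃ₗ[ℝ] V) (hw : w ∈ W0 Δ d Pos)
    (hN : invSet Pos w = levelGE Δ d 1 \ gen Δ (level Δ d 1 \ I)) :
    ∀ γ ∈ level Δ d 1,
      ((γ ∈ level Δ d 1 \ I ∧ ∀ ν ∈ level Δ d 1 \ I, leLevel d Pos ν γ → ν = γ) ↔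
        w γ ∈ simpleRoots Pos) :=
  stmt8_general Δ d Pos h I w hw hN
end
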